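/- arXiv:2012.15384 — 4 statements merged into one kernel-verified Lean document; each statement's English description precedes it below -/
import Mathlib

section
/- The map σ sending (x, g) to (-1)^{inv_x(g)}, where inv_x(g) is the number of transpositions (i,j) in the cycle decomposition of the involution x (with i<j) such that g(i)>g(j), is multiplicative: for involutions x₁, x₂ in Sₙ with x₁ = g₂ x₂ g₂⁻¹, one has σ(x₂, g₁g₂) = σ(x₂, g₂) · σ(x₁, g₁). -/
noncomputable section

/-- `invx x g` is the number of pairs `(i,j)` with `i < j`, `x i = j`, `x j = i`
(i.e. transpositions `(i,j)` in the cycle decomposition of the involution `x`)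
such that `g i > g j`. -/
def invx {n : ℕ} (x g : Equiv.Perm (Fin n)) : ℕ :=
  (Finset.univ.filter (fun p : Fin n × Fin n =>
    p.1 < p.2 ∧ x p.1 = p.2 ∧ x p.2 = p.1 ∧ g p.2 < g p.1)).card

/-!
`σ(x, g)` is the product, over the 2-cycles `(i j)` of `x` with `i < j`, of `-1` or `1` according
to whether `g` inverts the pair. Inversion of a pair is a cocycle: `g₁ g₂` inverts `(i, j)` iff
exactly one of "`g₂` inverts `(i, j)`" and "`g₁` inverts the sorted pair `{g₂ i, g₂ j}`" holds.
Sorting the image under `g₂` maps the 2-cycles of `x₂` bijectively onto those of `g₂ x₂ g₂⁻¹`,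
so the product for `g₁ g₂` splits into the one for `g₂` and the one for `g₁`.
-/

open Equiv Finset

namespace Equiv.Perm

variable {α : Type*} [LinearOrder α]

def swappedPairs [Fintype α] (x : Perm α) : Finset (α × α) :=
  univ.filter fun p => p.1 < p.2 ∧ x p.1 = p.2 ∧ x p.2 = p.1

def pairSign (g : Perm α) (p : α × α) : ℤ :=
  if g p.2 < g p.1 then -1 else 1

def sortedImage (g : Perm α) (p : α × α) : α × α :=
  (min (g p.1) (g p.2), max (g p.1) (g p.2))

theorem pairSign_mul {g₁ g₂ : Perm α} {p : α × α} (hp : p.1 ≠ p.2) :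
    pairSign (g₁ * g₂) p = pairSign g₂ p * pairSign g₁ (sortedImage g₂ p) := by
  have hne : g₂ p.1 ≠ g₂ p.2 := g₂.injective.ne hp
  have hne' : g₁ (g₂ p.1) ≠ g₁ (g₂ p.2) := g₁.injective.ne hne
  unfold pairSign sortedImage
  rcases lt_or_gt_of_ne hne with h | h <;> rcases lt_or_gt_of_ne hne' with h' | h' <;>
    simp [h.le, h, not_lt_of_gt h, h', not_lt_of_gt h']

theorem sortedImage_inv_sortedImage {p : α × α} (g : Perm α) (hp : p.1 ≤ p.2) :
    sortedImage g⁻¹ (sortedImage g p) = p := by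
  unfold sortedImage
  rcases le_total (g p.1) (g p.2) with h | h <;> simp [h, hp]

section Fintype

variable [Fintype α] {x : Perm α} {p : α × α}

@[simp]
theorem mem_swappedPairs : p ∈ swappedPairs x ↔ p.1 < p.2 ∧ x p.1 = p.2 ∧ x p.2 = p.1 := by
  simp only [swappedPairs, mem_filter, mem_univ, true_and]

theorem sortedImage_mem_swappedPairs (g : Perm α) (hp : p ∈ swappedPairs x) :
    sortedImage g p ∈ swappedPairs (g * x * g⁻¹) := by
  obtain ⟨hlt, h₁, h₂⟩ := mem_swappedPairs.mp hp
  have hne : g p.1 ≠ g p.2 := g.injective.ne hlt.ne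
  rcases lt_or_gt_of_ne hne with h | h <;> simp [sortedImage, h.le, h, h₁, h₂]

theorem prod_swappedPairs_conj {β : Type*} [CommMonoid β] (x g : Perm α) (f : α × α → β) :
    ∏ q ∈ swappedPairs (g * x * g⁻¹), f q = ∏ p ∈ swappedPairs x, f (sortedImage g p) := by
  have hle {y : Perm α} {p : α × α} (hp : p ∈ swappedPairs y) : p.1 ≤ p.2 :=
    (mem_swappedPairs.mp hp).1.le
  refine (prod_nbij' (sortedImage g) (sortedImage g⁻¹) (fun p hp => ?_) (fun q hq => ?_)
    (fun p hp => sortedImage_inv_sortedImage g (hle hp))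
    (fun q hq => by simpa using sortedImage_inv_sortedImage g⁻¹ (hle hq))
    (fun _ _ => rfl)).symm
  · exact sortedImage_mem_swappedPairs g hp
  · simpa [mul_assoc] using sortedImage_mem_swappedPairs g⁻¹ hq

end Fintype

end Equiv.Perm

open Equiv.Perm

theorem neg_one_pow_invx {n : ℕ} (x g : Perm (Fin n)) :
    (-1 : ℤ) ^ invx x g = ∏ p ∈ swappedPairs x, pairSign g p := by
  simp only [pairSign]
  rw [prod_ite, prod_const, prod_const, one_pow, mul_one, swappedPairs, filter_filter, invx]
  simp only [and_assoc]

theorem sigma_multiplicative_general {n : ℕ} (x₁ x₂ g₁ g₂ : Equiv.Perm (Fin n))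
    (hx₁ : x₁ = g₂ * x₂ * g₂⁻¹) :
    ((-1 : ℤ)) ^ invx x₂ (g₁ * g₂) = (-1 : ℤ) ^ invx x₂ g₂ * (-1 : ℤ) ^ invx x₁ g₁ := by
  simp only [neg_one_pow_invx, hx₁, prod_swappedPairs_conj, ← prod_mul_distrib]
  exact prod_congr rfl fun p hp => pairSign_mul (mem_swappedPairs.mp hp).1.ne

/-- Multiplicativity of `σ(x,g) = (-1)^{inv_x(g)}`: for involutions `x₁, x₂` in `Sₙ`
with `x₁ = g₂ x₂ g₂⁻¹`, one has `σ(x₂, g₁ g₂) = σ(x₂, g₂) · σ(x₁, g₁)`. -/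
theorem sigma_multiplicative {n : ℕ} (x₁ x₂ g₁ g₂ : Equiv.Perm (Fin n))
    (hx₂ : x₂ ^ 2 = 1) (hx₁ : x₁ = g₂ * x₂ * g₂⁻¹) :
    ((-1 : ℤ)) ^ invx x₂ (g₁ * g₂) = (-1 : ℤ) ^ invx x₂ g₂ * (-1 : ℤ) ^ invx x₁ g₁ :=
  sigma_multiplicative_general x₁ x₂ g₁ g₂ hx₁
end
end

section
/- For G = S₄ acting by conjugation on the set X of its ten involutions (including the identity), the representation Ind_{C_G((12))}^G(sgn ⊗ 1) ⊕ Ind_{C_G((12)(34))}^G(sign) ⊕ 1, where the inducing characters are the restrictions of the twisting character σ described below, is a Gelfand model for S₄: it contains every irreducible representation of S₄ with multiplicity exactly one. -/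
noncomputable section
open CategoryTheory
open scoped Classical

/-- The character of the representation of a finite group `G` induced from the function
`φ` on the subgroup `H` (the Frobenius formula). -/
def IndChar (G : Type) [Group G] [Fintype G] (H : Subgroup G) (φ : G → ℂ) (g : G) : ℂ :=
  (Nat.card H : ℂ)⁻¹ * ∑ x : G, if x⁻¹ * g * x ∈ H then φ (x⁻¹ * g * x) else 0

/-- The character `sgn ⊗ 1` of the centralizer `{1,(12),(34),(12)(34)}` of `(12)` in
`S₄`: it is `-1` exactly on `(12)` and `(12)(34)`. -/
def sgnTensorOne (g : Equiv.Perm (Fin 4)) : ℂ :=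
  if g = Equiv.swap 0 1 ∨ g = Equiv.swap 0 1 * Equiv.swap 2 3 then -1 else 1

/-- The restriction to a subgroup of the sign character of `S₄`. -/
def signChar (g : Equiv.Perm (Fin 4)) : ℂ := ((Equiv.Perm.sign g : ℤ) : ℂ)

/-- The character of the geometrically induced representation
`Ind_{C_G((12))}^{S₄}(sgn ⊗ 1) ⊕ Ind_{C_G((12)(34))}^{S₄}(sign) ⊕ 1`. -/
def gelfandModelCharS4 (g : Equiv.Perm (Fin 4)) : ℂ :=
  IndChar (Equiv.Perm (Fin 4)) (Subgroup.centralizer {Equiv.swap 0 1}) sgnTensorOne g +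
  IndChar (Equiv.Perm (Fin 4))
    (Subgroup.centralizer {Equiv.swap 0 1 * Equiv.swap 2 3}) signChar g + 1

/-!
By Frobenius reciprocity, the multiplicity of an irreducible `V` with character `χ` in the model
is `(10 χ 1 + 6 χ ((12)(34)) + 8 χ ((123))) / 24`. By Schur's lemma a class sum `∑ a ∈ K, ρ a`
acts on `V` by a scalar, and comparing traces gives `|K| χ(k)² = χ(1) ∑ a ∈ K, χ(a k)` for
`k ∈ K`. For the classes of `S₄` these are quadratic equations in the five character values;
together with `∑ g, χ g χ g⁻¹ = 24` they force
`(χ 1, χ ((12)(34)), χ ((123)))` to be `(1, 1, 1)`, `(2, 2, -1)` or `(3, -1, 0)`, the only other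
solution having `13 χ(1)² = 36`. In each case the multiplicity is `1`.
-/

open Equiv Finset

section CharacterTheory

variable {G : Type*} [Group G]

theorem FDRep.sum_ρ_mul_comm (V : FDRep ℂ G) {A : Finset G}
    (hA : ∀ x, ∀ a ∈ A, x * a * x⁻¹ ∈ A) (x : G) :
    (∑ a ∈ A, V.ρ a) * V.ρ x = V.ρ x * ∑ a ∈ A, V.ρ a := by
  rw [Finset.sum_mul, Finset.mul_sum]
  refine Finset.sum_nbij' (fun a => x⁻¹ * a * x) (fun a => x * a * x⁻¹) ?_ ?_ ?_ ?_ ?_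
  · intro a ha
    simpa using hA x⁻¹ a ha
  · exact fun a ha => hA x a ha
  · intro a _; group
  · intro a _; group
  · intro a _
    rw [← map_mul, ← map_mul]
    congr 1; group

theorem FDRep.exists_sum_ρ_eq_smul_one (V : FDRep ℂ G) [Simple V] {A : Finset G}
    (hA : ∀ x, ∀ a ∈ A, x * a * x⁻¹ ∈ A) : ∃ c : ℂ, ∑ a ∈ A, V.ρ a = c • 1 := by
  let T : V ⟶ V := ⟨ObjectProperty.homMk (ModuleCat.ofHom (∑ a ∈ A, V.ρ a)), fun x => by
    ext v; exact LinearMap.congr_fun (V.sum_ρ_mul_comm hA x) v⟩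
  obtain ⟨c, hc⟩ := endomorphism_simple_eq_smul_id ℂ T
  exact ⟨c, (congrArg (fun f => f.hom.hom.hom) hc).symm⟩

theorem FDRep.sum_char_mul_char (V : FDRep ℂ G) [Simple V] {A : Finset G}
    (hA : ∀ x, ∀ a ∈ A, x * a * x⁻¹ ∈ A) (g : G) :
    (∑ a ∈ A, V.character a) * V.character g =
      Module.finrank ℂ V * ∑ a ∈ A, V.character (a * g) := by
  obtain ⟨c, hc⟩ := V.exists_sum_ρ_eq_smul_one hA
  have hA_sum : ∑ a ∈ A, V.character a = c * Module.finrank ℂ V := by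
    simp only [FDRep.character]
    rw [← map_sum, hc, map_smul, LinearMap.trace_one, smul_eq_mul]
  have hAg_sum : ∑ a ∈ A, V.character (a * g) = c * V.character g := by
    simp only [FDRep.character, map_mul]
    rw [← map_sum, ← Finset.sum_mul, hc, smul_mul_assoc, one_mul, map_smul, smul_eq_mul]
  rw [hA_sum, hAg_sum]
  ring

theorem FDRep.sum_char_mul_char_inv_self [Fintype G] (V : FDRep ℂ G) [Simple V] :
    ∑ g, V.character g * V.character g⁻¹ = Nat.card G := by
  have h := FDRep.char_orthonormal V V
  rw [if_pos ⟨Iso.refl V⟩, inv_mul_eq_one₀ (by simp)] at h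
  exact h.symm

end CharacterTheory

theorem FDRep.char_inv_perm {k α : Type*} [Field k] [Fintype α] [DecidableEq α]
    (V : FDRep k (Perm α)) (g : Perm α) : V.character g⁻¹ = V.character g := by
  obtain ⟨x, hx⟩ := isConj_iff.mp (Perm.isConj_iff_cycleType_eq.mpr (Perm.cycleType_inv g))
  rw [← FDRep.char_conj V g⁻¹ x, hx]

theorem sum_indChar_mul {G : Type} [Group G] [Fintype G] (H : Subgroup G) (φ f : G → ℂ)
    (hf : ∀ g x, f (x * g * x⁻¹) = f g) :
    ∑ g, IndChar G H φ g * f g = Fintype.card G * (Nat.card H : ℂ)⁻¹ * ∑ h : H, φ h * f h := by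
  have hconj : ∀ x : G, ∑ g, (if x⁻¹ * g * x ∈ H then φ (x⁻¹ * g * x) else 0) * f g =
      ∑ g, if g ∈ H then φ g * f g else 0 := by
    intro x
    refine Fintype.sum_equiv (MulAut.conj x⁻¹).toEquiv _ _ fun g => ?_
    have hg : f (x⁻¹ * g * x) = f g := by simpa using hf g x⁻¹
    simp only [MulEquiv.toEquiv_eq_coe, MulEquiv.coe_toEquiv, MulAut.conj_apply, inv_inv, hg,
      ite_mul, zero_mul]
  have hsub : ∑ g, (if g ∈ H then φ g * f g else 0) = ∑ h : H, φ h * f h := by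
    rw [← Finset.sum_filter]
    exact Finset.sum_subtype _ (by simp) _
  calc ∑ g, IndChar G H φ g * f g
      = (Nat.card H : ℂ)⁻¹ *
          ∑ x, ∑ g, (if x⁻¹ * g * x ∈ H then φ (x⁻¹ * g * x) else 0) * f g := by
        simp only [IndChar, mul_assoc, Finset.mul_sum, Finset.sum_mul]
        rw [Finset.sum_comm]
    _ = _ := by
        rw [Finset.sum_congr rfl fun x _ => hconj x, Finset.sum_const, Finset.card_univ,
          nsmul_eq_mul, hsub]
        ring

section Centralizer

variable {G : Type*} [Group G] [Fintype G] [DecidableEq G] (t : G)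

theorem Subgroup.card_centralizer_singleton :
    Nat.card (Subgroup.centralizer {t}) = #{g | g * t = t * g} := by
  simp [Nat.card_eq_fintype_card, Fintype.card_subtype, Subgroup.mem_centralizer_singleton_iff]

-- The `Fintype` instance is implicit so that the lemma matches whichever instance the sum uses.
theorem Subgroup.sum_centralizer_singleton {M : Type*} [AddCommMonoid M]
    {_ : Fintype (Subgroup.centralizer {t})} (F : G → M) :
    ∑ h : Subgroup.centralizer {t}, F h = ∑ g with g * t = t * g, F g :=
  (Finset.sum_subtype _ (by simp [Subgroup.mem_centralizer_singleton_iff]) F).symm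

end Centralizer

theorem ten_mul_add_eq_24_of_class_equations (n : ℕ) (c d : ℂ) (hc : 3 * c ^ 2 = n ^ 2 + 2 * n * c)
    (hd : 8 * d ^ 2 = n ^ 2 + 3 * n * c + 4 * n * d)
    (hnorm : 5 * n ^ 2 + 7 * n * c + 12 * n * d = 24) :
    10 * n + 6 * c + 8 * d = 24 := by
  have hsq : ∀ k : ℕ, (n : ℂ) ^ 2 = k ^ 2 → (n : ℂ) = k := fun k h => by
    rw [Nat.pow_left_injective two_ne_zero (by exact_mod_cast h : n ^ 2 = k ^ 2)]
  rcases mul_eq_zero.mp (by linear_combination hc : (c - n) * (3 * c + n) = 0) with hc | hc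
  · rcases mul_eq_zero.mp (by linear_combination hd / 4 + 3 * n / 4 * hc :
        (d - n) * (2 * d + n) = 0) with hd | hd
    · have hn := hsq 1 (by linear_combination hnorm / 24 - 7 * n / 24 * hc - n / 2 * hd)
      linear_combination 24 * hn + 6 * hc + 8 * hd
    · have hn := hsq 2 (by linear_combination hnorm / 6 - 7 * n / 6 * hc - n * hd)
      linear_combination 12 * hn + 6 * hc + 4 * hd
  · rcases mul_eq_zero.mp (by linear_combination hd / 4 + n / 4 * hc :
        d * (2 * d - n) = 0) with hd | hd
    · have hn := hsq 3 (by linear_combination 3 * hnorm / 8 - 7 * n / 8 * hc - 9 * n / 2 * hd)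
      linear_combination 8 * hn + 2 * hc + 8 * hd
    · have h13 : 13 * (n : ℂ) ^ 2 = 36 := by
        linear_combination 3 * hnorm / 2 - 7 * n / 2 * hc - 9 * n * hd
      have h13' : 13 * n ^ 2 = 36 := by exact_mod_cast h13
      omega

namespace GelfandModelS4

def classRep : Fin 5 → Perm (Fin 4) :=
  ![1, swap 0 1, swap 0 1 * swap 2 3, swap 0 1 * swap 1 2, swap 0 1 * swap 1 2 * swap 2 3]

theorem classRep_zero : classRep 0 = 1 := rfl

def classOf (g : Perm (Fin 4)) : Fin 5 :=
  if g.cycleType = 0 then 0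
  else if g.cycleType = {2} then 1
  else if g.cycleType = {2, 2} then 2
  else if g.cycleType = {3} then 3
  else 4

def conjClass (i : Fin 5) : Finset (Perm (Fin 4)) := {g | classOf g = i}

def classWeight (s : Finset (Perm (Fin 4))) (w : Perm (Fin 4) → ℤ) (i : Fin 5) : ℤ :=
  ∑ g ∈ s with classOf g = i, w g

theorem cycleType_classRep_classOf :
    ∀ g : Perm (Fin 4), (classRep (classOf g)).cycleType = g.cycleType := by
  decide

theorem card_conjClass : ∀ i, #(conjClass i) = ![1, 6, 3, 8, 6] i := by
  decide

theorem classWeight_univ_one : classWeight univ 1 = ![1, 6, 3, 8, 6] := by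
  funext i; revert i; decide

theorem classOf_conj (g x : Perm (Fin 4)) : classOf (x * g * x⁻¹) = classOf g := by
  simp only [classOf, Perm.cycleType_conj]

theorem conjClass_conj (i : Fin 5) : ∀ x, ∀ g ∈ conjClass i, x * g * x⁻¹ ∈ conjClass i := by
  intro x g hg
  simpa [conjClass, classOf_conj] using hg

variable {f : Perm (Fin 4) → ℂ}

theorem eq_classRep_classOf (hf : ∀ g x, f (x * g * x⁻¹) = f g) (g : Perm (Fin 4)) :
    f g = f (classRep (classOf g)) := by
  obtain ⟨x, hx⟩ :=
    isConj_iff.mp (Perm.isConj_iff_cycleType_eq.mpr (cycleType_classRep_classOf g))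
  rw [← hf (classRep (classOf g)) x, hx]

theorem sum_mul_eq_sum_classWeight (hf : ∀ g x, f (x * g * x⁻¹) = f g)
    (s : Finset (Perm (Fin 4))) (w : Perm (Fin 4) → ℤ) :
    ∑ g ∈ s, (w g : ℂ) * f g = ∑ i, (classWeight s w i : ℂ) * f (classRep i) := by
  rw [← Finset.sum_fiberwise s classOf]
  refine Finset.sum_congr rfl fun i _ => ?_
  rw [classWeight, Int.cast_sum, Finset.sum_mul]
  refine Finset.sum_congr rfl fun g hg => ?_
  rw [eq_classRep_classOf hf g, (Finset.mem_filter.mp hg).2]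

theorem sum_eq_sum_classWeight (hf : ∀ g x, f (x * g * x⁻¹) = f g)
    (s : Finset (Perm (Fin 4))) :
    ∑ g ∈ s, f g = ∑ i, (classWeight s 1 i : ℂ) * f (classRep i) := by
  simpa using sum_mul_eq_sum_classWeight hf s 1

theorem sum_indChar_centralizer_mul_char (V : FDRep ℂ (Perm (Fin 4))) (t : Perm (Fin 4))
    (w : Perm (Fin 4) → ℤ) :
    ∑ g, IndChar _ (Subgroup.centralizer {t}) (fun g => (w g : ℂ)) g * V.character g =
      24 / #{g | g * t = t * g} *
        ∑ i, (classWeight {g | g * t = t * g} w i : ℂ) * V.character (classRep i) := by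
  have hχ : ∀ g x, V.character (x * g * x⁻¹) = V.character g := fun g x => V.char_conj g x
  rw [sum_indChar_mul _ _ _ hχ, Subgroup.card_centralizer_singleton,
    Subgroup.sum_centralizer_singleton _ fun g => (w g : ℂ) * V.character g,
    sum_mul_eq_sum_classWeight hχ, Fintype.card_perm, Fintype.card_fin]
  norm_num [Nat.factorial, div_eq_mul_inv]

theorem sum_gelfandModelCharS4_mul_char (V : FDRep ℂ (Perm (Fin 4))) :
    ∑ g, gelfandModelCharS4 g * V.character g =
      10 * V.character 1 + 6 * V.character (classRep 2) + 8 * V.character (classRep 3) := by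
  have hsgn : sgnTensorOne =
      fun g => ((if g = swap 0 1 ∨ g = swap 0 1 * swap 2 3 then -1 else 1 : ℤ) : ℂ) := by
    funext g; unfold sgnTensorOne; split_ifs <;> simp
  have hsign : signChar = fun g => ((Perm.sign g : ℤ) : ℂ) := rfl
  have hw₁ : classWeight {g | g * swap 0 1 = swap 0 1 * g}
      (fun g => if g = swap 0 1 ∨ g = swap 0 1 * swap 2 3 then -1 else 1) =
        ![1, 0, -1, 0, 0] := by
    funext i; revert i; decide
  have hw₂ : classWeight {g | g * (swap 0 1 * swap 2 3) = swap 0 1 * swap 2 3 * g}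
      (fun g => Perm.sign g) = ![1, -2, 3, 0, -2] := by
    funext i; revert i; decide
  have hc₁ : #{g : Perm (Fin 4) | g * swap 0 1 = swap 0 1 * g} = 4 := by decide
  have hc₂ : #{g : Perm (Fin 4) | g * (swap 0 1 * swap 2 3) = swap 0 1 * swap 2 3 * g} = 8 := by
    decide
  simp only [gelfandModelCharS4, hsgn, hsign, add_mul, one_mul, Finset.sum_add_distrib,
    sum_indChar_centralizer_mul_char, sum_eq_sum_classWeight fun g x => V.char_conj g x,
    hw₁, hw₂, classWeight_univ_one, hc₁, hc₂, Fin.sum_univ_five, Matrix.cons_val, classRep_zero]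
  push_cast
  ring

theorem card_conjClass_mul_char_sq (V : FDRep ℂ (Perm (Fin 4))) [Simple V] (i : Fin 5) :
    (#(conjClass i) : ℂ) * V.character (classRep i) ^ 2 =
      Module.finrank ℂ V *
        ∑ j, (classWeight ((conjClass i).map (mulRightEmbedding (classRep i))) 1 j : ℂ) *
          V.character (classRep j) := by
  have hχ : ∀ g x, V.character (x * g * x⁻¹) = V.character g := fun g x => V.char_conj g x
  have hK : ∑ g ∈ conjClass i, V.character g = #(conjClass i) * V.character (classRep i) := by
    rw [Finset.sum_congr rfl fun g hg => by
      rw [eq_classRep_classOf hχ g, (Finset.mem_filter.mp hg).2], Finset.sum_const, nsmul_eq_mul]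
  have h := V.sum_char_mul_char (conjClass_conj i) (classRep i)
  rw [hK] at h
  rw [← sum_eq_sum_classWeight hχ, Finset.sum_map]
  simp only [mulRightEmbedding_apply, ← h]
  ring

theorem ten_mul_finrank_add_eq_24 (V : FDRep ℂ (Perm (Fin 4))) [Simple V] :
    10 * (Module.finrank ℂ V : ℂ) + 6 * V.character (classRep 2) +
      8 * V.character (classRep 3) = 24 := by
  have hrow : ∀ i j, classWeight ((conjClass i).map (mulRightEmbedding (classRep i))) 1 j =
      ![![1, 0, 0, 0, 0], ![1, 0, 1, 4, 0], ![1, 0, 2, 0, 0], ![1, 0, 3, 4, 0],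
        ![1, 0, 1, 4, 0]] i j := by
    decide
  have hrel := card_conjClass_mul_char_sq V
  simp only [hrow, card_conjClass, Fin.sum_univ_five, classRep_zero, FDRep.char_one] at hrel
  have R1 := hrel 1
  have R2 := hrel 2
  have R3 := hrel 3
  have R4 := hrel 4
  simp only [Matrix.cons_val] at R1 R2 R3 R4
  have hnorm := V.sum_char_mul_char_inv_self
  simp only [FDRep.char_inv_perm] at hnorm
  rw [sum_eq_sum_classWeight (fun g x => by rw [FDRep.char_conj]),
    classWeight_univ_one, Fin.sum_univ_five] at hnorm
  simp only [Matrix.cons_val, classRep_zero, FDRep.char_one, Nat.card_perm, Nat.card_fin,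
    Nat.factorial] at hnorm
  exact ten_mul_add_eq_24_of_class_equations _ _ _ (by linear_combination R2)
    (by linear_combination R3) (by linear_combination hnorm - R1 - R2 - R3 - R4)

end GelfandModelS4

/-- The representation of `S₄` with character
`Ind_{C_G((12))}^{S₄}(sgn ⊗ 1) ⊕ Ind_{C_G((12)(34))}^{S₄}(sign) ⊕ 1` is a Gelfand model
for `S₄`: every irreducible representation of `S₄` occurs in it with multiplicity
exactly one. -/
theorem gelfand_model_S4 (V : FDRep ℂ (Equiv.Perm (Fin 4))) (hV : Simple V) :
    (Fintype.card (Equiv.Perm (Fin 4)) : ℂ)⁻¹ *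
      ∑ g : Equiv.Perm (Fin 4), gelfandModelCharS4 g * V.character g⁻¹ = 1 := by
  simp only [FDRep.char_inv_perm, GelfandModelS4.sum_gelfandModelCharS4_mul_char, FDRep.char_one,
    GelfandModelS4.ten_mul_finrank_add_eq_24 V]
  simp [Fintype.card_perm, Nat.factorial]
end
end

section
/- The map ψ̃ on the action groupoid A(X, GL₂(𝔽_q)), where X is the set of pairs (u, ω) with u a nonzero vector of 𝔽_q² and ω a nonzero element of Λ²(𝔽_q²), defined by ψ̃(x, g, y) = ψ(b) where x = (u, u∧v), y = (u', u'∧v') for chosen vectors v, v', and b ∈ 𝔽_q is the unique scalar with g(v) = v' + b u', is a multiplicative character of the groupoid: ψ̃(x, hg, z) = ψ̃(y, h, z) · ψ̃(x, g, y) whenever y = g·x and z = h·y. -/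
/-!
Applying `h` to `g v = v' + b u'` gives `(hg) v = v'' + (b' + b) u''`, since `h u' = u''`.
Comparing with `(hg) v = v'' + b'' u''` and cancelling `u'' = (hg) u ≠ 0` yields
`b'' = b' + b`, and `ψ` turns this sum into a product.
-/

noncomputable section

/-- The wedge product `u ∧ v` of two vectors of `𝔽_q²`, identified with a scalar via the
standard trivialization of `Λ²(𝔽_q²)`. -/
def wedge {F : Type} [Field F] (u v : Fin 2 → F) : F := u 0 * v 1 - u 1 * v 0

section

variable {R M N P : Type*} [Ring R] [IsCancelMulZero R]
  [AddCommGroup M] [AddCommGroup N] [AddCommGroup P]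
  [Module R M] [Module R N] [Module R P] [Module.IsTorsionFree R P]

theorem shift_comp_eq_add (g : M →ₗ[R] N) (h : N →ₗ[R] P) {v : M} {v' u' : N} {v'' u'' : P}
    {b b' b'' : R} (hb : g v = v' + b • u') (hb' : h v' = v'' + b' • u'') (hu' : h u' = u'')
    (hb'' : h (g v) = v'' + b'' • u'') (hu'' : u'' ≠ 0) : b'' = b' + b := by
  refine smul_left_injective R hu'' (add_left_cancel (a := v'') ?_)
  simp only [← hb'', hb, map_add, map_smul, hb', hu', add_smul, add_assoc]

end

theorem psi_tilde_multiplicative_general (F : Type) [Field F]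
    (ψ : AddChar F ℂ)
    (g h : GL (Fin 2) F)
    (u u' u'' : Fin 2 → F) (ω ω' ω'' : F)
    (hu : u ≠ 0)
    (hy : u' = (g : Matrix (Fin 2) (Fin 2) F).mulVec u ∧
          ω' = (g : Matrix (Fin 2) (Fin 2) F).det * ω)
    (hz : u'' = (h : Matrix (Fin 2) (Fin 2) F).mulVec u' ∧
          ω'' = (h : Matrix (Fin 2) (Fin 2) F).det * ω')
    (v v' v'' : Fin 2 → F)
    (b b' b'' : F)
    (hb : (g : Matrix (Fin 2) (Fin 2) F).mulVec v = v' + b • u')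
    (hb' : (h : Matrix (Fin 2) (Fin 2) F).mulVec v' = v'' + b' • u'')
    (hb'' : ((h * g : GL (Fin 2) F) : Matrix (Fin 2) (Fin 2) F).mulVec v = v'' + b'' • u'') :
    ψ b'' = ψ b' * ψ b := by
  obtain ⟨rfl, -⟩ := hy
  obtain ⟨rfl, -⟩ := hz
  have hu'' : ((h * g : GL (Fin 2) F) : Matrix (Fin 2) (Fin 2) F).mulVec u ≠ 0 :=
    (Matrix.mulVec_injective_of_isUnit (h * g).isUnit).ne_iff' (Matrix.mulVec_zero _) |>.mpr hu
  rw [Units.val_mul, ← Matrix.mulVec_mulVec] at hb'' hu''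
  rw [shift_comp_eq_add (Matrix.mulVecLin (g : Matrix (Fin 2) (Fin 2) F))
    (Matrix.mulVecLin (h : Matrix (Fin 2) (Fin 2) F)) hb hb' rfl hb'' hu'',
    AddChar.map_add_eq_mul]

/-- Multiplicativity of the character `ψ̃` of the action groupoid `A(X, GL₂(𝔽_q))`,
where `X` is the set of pairs `(u, ω)`, `u ≠ 0` a vector and `ω ≠ 0` a `2`-vector, with
`g · (u, ω) = (g u, det g · ω)`.  Given chosen vectors `v, v', v''` with `u ∧ v = ω` etc.,
and the unique scalars `b, b', b''` with `g v = v' + b u'`, `h v' = v'' + b' u''`,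
`(hg) v = v'' + b'' u''`, one has `ψ̃(x, hg, z) = ψ̃(y, h, z) · ψ̃(x, g, y)`,
i.e. `ψ(b'') = ψ(b') · ψ(b)`. -/
theorem psi_tilde_multiplicative (F : Type) [Field F] [Fintype F]
    (ψ : AddChar F ℂ)
    (g h : GL (Fin 2) F)
    (u u' u'' : Fin 2 → F) (ω ω' ω'' : F)
    (hu : u ≠ 0) (hω : ω ≠ 0)
    (hy : u' = (g : Matrix (Fin 2) (Fin 2) F).mulVec u ∧
          ω' = (g : Matrix (Fin 2) (Fin 2) F).det * ω)
    (hz : u'' = (h : Matrix (Fin 2) (Fin 2) F).mulVec u' ∧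
          ω'' = (h : Matrix (Fin 2) (Fin 2) F).det * ω')
    (v v' v'' : Fin 2 → F)
    (hv : wedge u v = ω) (hv' : wedge u' v' = ω') (hv'' : wedge u'' v'' = ω'')
    (b b' b'' : F)
    (hb : (g : Matrix (Fin 2) (Fin 2) F).mulVec v = v' + b • u')
    (hb' : (h : Matrix (Fin 2) (Fin 2) F).mulVec v' = v'' + b' • u'')
    (hb'' : ((h * g : GL (Fin 2) F) : Matrix (Fin 2) (Fin 2) F).mulVec v = v'' + b'' • u'') :
    ψ b'' = ψ b' * ψ b :=
  psi_tilde_multiplicative_general F ψ g h u u' u'' ω ω' ω'' hu hy hz v v' v'' b b' b'' hb hb' hb''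
end
end

section
/- For the quaternion group Q₈, the Gelfand character (the sum of all irreducible complex characters) is not an integer linear combination of permutation characters: there are no integers a_H, indexed by subgroups H ≤ Q₈, such that the sum of all irreducible characters equals Σ_H a_H · Ind_H^{Q₈}(1). -/
/-!
In `QuaternionGroup 2` the central element `-1` is `a 2`. Pair both sides with the character `χ`
of the two-dimensional representation, which is `2` at `1`, `-2` at `-1` and `0` elsewhere
(so `⟨χ, χ⟩ = 1` and the representation is irreducible); pairing a class function `f` with `χ`
gives `2 (f 1 - f (-1))`.
By orthogonality the Gelfand character `Γ` pairs to `|Q₈| = 8`, so `Γ 1 - Γ (-1) = 4`.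
On the other side, `-1` is central, so it fixes either every coset of `H` (if `-1 ∈ H`) or none;
and every nontrivial subgroup of `Q₈` contains `-1`. Hence `π_H 1 - π_H (-1)` is `0` or
`[Q₈ : 1] = 8`, and an integer combination of permutation characters would make `4` divisible
by `8`.
-/

open CategoryTheory

/-- The permutation character of a finite group `G` acting on `G ⧸ H`:
its value at `g` is the number of fixed points of `g` on `G ⧸ H`; this is the
character induced from the trivial character of `H`. -/
noncomputable def permChar (G : Type) [Group G] (H : Subgroup G) (g : G) : ℂ :=
  (Nat.card {c : G ⧸ H // g • c = c} : ℂ)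

section PermChar

variable {G : Type} [Group G]

lemma permChar_one (H : Subgroup G) : permChar G H 1 = H.index := by
  simp [permChar, Subgroup.index]

lemma smul_coset_eq_self_iff_of_mem_center {z : G} (hz : z ∈ Subgroup.center G)
    {H : Subgroup G} (c : G ⧸ H) : z • c = c ↔ z ∈ H := by
  induction c using QuotientGroup.induction_on with
  | H g =>
    rw [MulAction.Quotient.smul_coe, QuotientGroup.eq, smul_eq_mul, mul_inv_rev,
      Subgroup.mem_center_iff.mp (inv_mem hz) g⁻¹, inv_mul_cancel_right, inv_mem_iff]

lemma permChar_of_mem_center_of_mem {z : G} (hz : z ∈ Subgroup.center G) {H : Subgroup G}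
    (hzH : z ∈ H) : permChar G H z = H.index := by
  simp [permChar, smul_coset_eq_self_iff_of_mem_center hz, hzH, Subgroup.index]

lemma permChar_of_mem_center_of_notMem {z : G} (hz : z ∈ Subgroup.center G) {H : Subgroup G}
    (hzH : z ∉ H) : permChar G H z = 0 := by
  simp [permChar, smul_coset_eq_self_iff_of_mem_center hz, hzH]

end PermChar

namespace FDRep

variable {k G ι : Type} [Field k] [IsAlgClosed k] [Group G] [Fintype G]
  [Invertible (Nat.card G : k)] [Fintype ι]

lemma sum_sum_character_mul_character_inv {V : ι → FDRep k G} (hV : ∀ i, Simple (V i))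
    (W : FDRep k G) [Simple W] (hW : ∃! i, Nonempty (V i ≅ W)) :
    ∑ g, (∑ i, (V i).character g) * W.character g⁻¹ = Nat.card G := by
  classical
  obtain ⟨i₀, hi₀, huniq⟩ := hW
  have horth (i : ι) : ∑ g, (V i).character g * W.character g⁻¹ =
      if i = i₀ then (Nat.card G : k) else 0 := by
    have := hV i
    have h := char_orthonormal (V i) W
    have hiff : Nonempty (V i ≅ W) ↔ i = i₀ := ⟨huniq i, fun h => h ▸ hi₀⟩
    rw [inv_mul_eq_iff_eq_mul₀ (Invertible.ne_zero _)] at h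
    simp_all
  simp only [Finset.sum_mul]
  rw [Finset.sum_comm]
  simp [horth]

end FDRep

namespace ZMod

lemma neg_natCast_two_mul (n : ℕ) : -(n : ZMod (2 * n)) = n := by
  rw [neg_eq_iff_add_eq_zero, ← two_mul]
  exact_mod_cast natCast_self (2 * n)

lemma stdAddChar_natCast_two_mul (n : ℕ) [NeZero n] : stdAddChar (N := 2 * n) n = -1 := by
  have hn : (n : ℂ) ≠ 0 := NeZero.ne _
  rw [← Int.cast_natCast, stdAddChar_coe, ← Complex.exp_pi_mul_I]
  congr 1
  push_cast
  field_simp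

end ZMod

namespace QuaternionGroup

open Matrix

variable {n : ℕ}

lemma a_mem_center : (a n : QuaternionGroup n) ∈ Subgroup.center (QuaternionGroup n) := by
  rw [Subgroup.mem_center_iff]
  rintro (i | i)
  · simp only [a_mul_a, add_comm]
  · rw [xa_mul_a, a_mul_xa, sub_eq_add_neg, ZMod.neg_natCast_two_mul]

section Representation

variable {k : Type} [CommRing k] (ψ : AddChar (ZMod (2 * n)) k)

def diagMatrix (i : ZMod (2 * n)) : Matrix (Fin 2) (Fin 2) k := diagonal ![ψ i, ψ (-i)]

def rotMatrix : Matrix (Fin 2) (Fin 2) k := !![0, -1; 1, 0]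

lemma diagMatrix_mul (i j : ZMod (2 * n)) :
    diagMatrix ψ i * diagMatrix ψ j = diagMatrix ψ (i + j) := by
  ext r s; fin_cases r <;> fin_cases s <;> simp [diagMatrix, AddChar.map_add_eq_mul, add_comm]

lemma diagMatrix_mul_rotMatrix (i : ZMod (2 * n)) :
    diagMatrix ψ i * rotMatrix = rotMatrix * diagMatrix ψ (-i) := by
  ext r s; fin_cases r <;> fin_cases s <;> simp [diagMatrix, rotMatrix]

lemma rotMatrix_mul_self (hψ : ψ n = -1) :
    (rotMatrix : Matrix (Fin 2) (Fin 2) k) * rotMatrix = diagMatrix ψ n := by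
  ext r s; fin_cases r <;> fin_cases s <;>
    simp [diagMatrix, rotMatrix, ZMod.neg_natCast_two_mul, hψ]

def toMatrix : QuaternionGroup n → Matrix (Fin 2) (Fin 2) k
  | a i => diagMatrix ψ i
  | xa i => rotMatrix * diagMatrix ψ i

variable {ψ}

def matrixHom (hψ : ψ n = -1) : QuaternionGroup n →* Matrix (Fin 2) (Fin 2) k where
  toFun := toMatrix ψ
  map_one' := by
    ext r s; fin_cases r <;> fin_cases s <;> simp [← a_zero, toMatrix, diagMatrix]
  map_mul' := by
    rintro (i | i) (j | j)
    · simp only [a_mul_a, toMatrix, diagMatrix_mul]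
    · simp only [a_mul_xa, toMatrix, ← mul_assoc, diagMatrix_mul_rotMatrix]
      rw [mul_assoc, diagMatrix_mul, sub_eq_neg_add]
    · simp only [xa_mul_a, toMatrix, mul_assoc, diagMatrix_mul]
    · simp only [xa_mul_xa, toMatrix]
      rw [mul_assoc, ← mul_assoc (diagMatrix ψ i), diagMatrix_mul_rotMatrix, ← mul_assoc,
        ← mul_assoc, rotMatrix_mul_self ψ hψ, mul_assoc, diagMatrix_mul, diagMatrix_mul,
        add_sub_assoc, sub_eq_neg_add]

noncomputable def representation (hψ : ψ n = -1) :
    Representation k (QuaternionGroup n) (Fin 2 → k) :=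
  toLinAlgEquiv'.toMonoidHom.comp (matrixHom hψ)

end Representation

section Character

variable {K : Type} [Field K] {ψ : AddChar (ZMod (2 * n)) K} (hψ : ψ n = -1)

lemma character_representation (g : QuaternionGroup n) :
    (FDRep.of (representation hψ)).character g = (toMatrix ψ g).trace :=
  trace_toLin'_eq _

lemma character_representation_a (i : ZMod (2 * n)) :
    (FDRep.of (representation hψ)).character (a i) = ψ i + ψ (-i) := by
  simp [character_representation, toMatrix, diagMatrix]

lemma character_representation_xa (i : ZMod (2 * n)) :
    (FDRep.of (representation hψ)).character (xa i) = 0 := by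
  simp [character_representation, toMatrix, diagMatrix, rotMatrix, trace_fin_two, vecMul,
    dotProduct, Fin.sum_univ_two]

end Character

noncomputable def stdRep (n : ℕ) [NeZero n] : FDRep ℂ (QuaternionGroup n) :=
  FDRep.of (representation (ZMod.stdAddChar_natCast_two_mul n))

lemma stdRep_two_character (g : QuaternionGroup 2) :
    (stdRep 2).character g = if g = 1 then 2 else if g = a 2 then -2 else 0 := by
  have hψ : ZMod.stdAddChar (2 : ZMod (2 * 2)) = -1 := ZMod.stdAddChar_natCast_two_mul 2
  have hshift (j : ZMod (2 * 2)) : ZMod.stdAddChar (j + 2) = -ZMod.stdAddChar j := by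
    rw [AddChar.map_add_eq_mul, hψ, mul_neg_one]
  rcases g with i | i
  · rw [stdRep, character_representation_a, ← a_zero]
    simp only [a.injEq]
    obtain rfl | rfl | rfl | rfl : i = 0 ∨ i = 1 ∨ i = 2 ∨ i = 3 := by decide +revert
    · norm_num
    · rw [show (-1 : ZMod (2 * 2)) = 1 + 2 from rfl, hshift]
      norm_num +decide
    · rw [show (-2 : ZMod (2 * 2)) = 2 from rfl, hψ]
      norm_num +decide
    · rw [show (-3 : ZMod (2 * 2)) = 1 from rfl, show (3 : ZMod (2 * 2)) = 1 + 2 from rfl,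
        hshift]
      norm_num +decide
  · simp [stdRep, character_representation_xa, one_def, -a_zero]

lemma sum_mul_stdRep_two_character_inv (f : QuaternionGroup 2 → ℂ) :
    ∑ g, f g * (stdRep 2).character g⁻¹ = 2 * (f 1 - f (a 2)) := by
  have hinv : ∀ g : QuaternionGroup 2, g⁻¹ = a 2 ↔ g = a 2 := by decide
  have hz : (a 2 : QuaternionGroup 2) ≠ 1 := by decide
  simp only [stdRep_two_character, inv_eq_one, hinv, mul_ite, mul_zero, Finset.sum_ite,
    Finset.sum_const_zero, add_zero]
  simp [Finset.filter_eq', hz]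
  ring

instance : Simple (stdRep 2) := by
  have hz : (a 2 : QuaternionGroup 2) ≠ 1 := by decide
  rw [FDRep.simple_iff_char_is_norm_one, sum_mul_stdRep_two_character_inv, stdRep_two_character,
    stdRep_two_character, Nat.card_eq_fintype_card, card]
  simp [hz]
  norm_num

lemma eq_bot_of_a_two_notMem {H : Subgroup (QuaternionGroup 2)} (h : a 2 ∉ H) : H = ⊥ := by
  have hsq : ∀ g : QuaternionGroup 2, g = 1 ∨ g = a 2 ∨ g ^ 2 = a 2 := by decide
  rw [Subgroup.eq_bot_iff_forall]
  intro g hg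
  obtain h1 | rfl | h2 := hsq g
  · exact h1
  · exact absurd hg h
  · exact absurd (h2 ▸ pow_mem hg 2) h

lemma permChar_one_sub_permChar_a_two (H : Subgroup (QuaternionGroup 2)) :
    ∃ m : ℤ, permChar _ H 1 - permChar _ H (a 2) = 8 * m := by
  have hz : (a 2 : QuaternionGroup 2) ∈ Subgroup.center _ := a_mem_center
  by_cases h : a 2 ∈ H
  · exact ⟨0, by simp [permChar_of_mem_center_of_mem hz h, permChar_one]⟩
  · refine ⟨1, ?_⟩
    rw [permChar_of_mem_center_of_notMem hz h, permChar_one, eq_bot_of_a_two_notMem h,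
      Subgroup.index_bot, Nat.card_eq_fintype_card, card]
    norm_num

end QuaternionGroup

/-- The Gelfand character of the quaternion group `Q₈` (the sum of all its irreducible
complex characters) is not an integer linear combination of permutation characters
`Ind_H^{Q₈}(1)`, `H` ranging over subgroups of `Q₈`. -/
theorem quaternion_gelfand_not_integer_combination_of_perm_chars
    (ι : Type) [Fintype ι] (V : ι → FDRep ℂ (QuaternionGroup 2))
    (hsimple : ∀ i, Simple (V i))
    (hcomplete : ∀ W : FDRep ℂ (QuaternionGroup 2), Simple W → ∃! i, Nonempty (V i ≅ W)) :
    ¬ ∃ (s : Finset (Subgroup (QuaternionGroup 2))) (a : Subgroup (QuaternionGroup 2) → ℤ),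
      ∀ g : QuaternionGroup 2,
        ∑ i, (V i).character g = ∑ H ∈ s, (a H : ℂ) * permChar (QuaternionGroup 2) H g := by
  rintro ⟨s, c, hc⟩
  have hpair := FDRep.sum_sum_character_mul_character_inv hsimple (QuaternionGroup.stdRep 2)
    (hcomplete _ inferInstance)
  choose m hm using QuaternionGroup.permChar_one_sub_permChar_a_two
  rw [QuaternionGroup.sum_mul_stdRep_two_character_inv, hc, hc, ← Finset.sum_sub_distrib]
    at hpair
  simp only [← mul_sub, hm, Nat.card_eq_fintype_card, QuaternionGroup.card] at hpair
  have h : 2 * ∑ H ∈ s, c H * (8 * m H) = 8 := by exact_mod_cast hpair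
  simp only [mul_left_comm _ (8 : ℤ), ← Finset.mul_sum] at h
  omega
end
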